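/- The set of antiderivations of the Leibniz algebra L₁₂ is a linear subspace of End(V) of dimension 6; explicitly, a linear map D : V → V is an antiderivation of L₁₂ if and only if there exist complex numbers m, c, u, v, w, z such that D(e₁) = c·e₂ + u·e₃ + v·e₄, D(e₂) = m·e₁ − c·e₂ + w·e₃ + z·e₄, and D(e₃) = D(e₄) = 0. -/

import Mathlib

/-!
Swapping `x` and `y` in the antiderivation identity shows that `D` kills every symmetrized
bracket `⟦x,y⟧ + ⟦y,x⟧`; these span `⟨e₃, e₄⟩`, so `D(e₃) = D(e₄) = 0`, and the identity at
`(e₁, e₂)` then gives the two remaining linear conditions on `D(e₁)` and `D(e₂)`. Conversely,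
such a `D` kills every bracket and makes `⟦x, D y⟧` symmetric in `x, y`. The antiderivations
are thus the span of six explicit, linearly independent endomorphisms.
-/

/-- `V = ℂ⁴`. -/
abbrev V : Type := Fin 4 → ℂ

/-- standard basis: `e 0 = e₁`, ..., `e 3 = e₄`. -/
def e (i : Fin 4) : V := Pi.single i 1

/-- Bracket of the Leibniz algebra `L₁₂`:
`⟦e₁,e₂⟧ = e₃`, `⟦e₂,e₁⟧ = e₄`, `⟦e₂,e₂⟧ = -e₃`, all other basis products zero. -/
def br (x y : V) : V :=
  (x 0 * y 1 - x 1 * y 1) • e 2 + (x 1 * y 0) • e 3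

/-- An antiderivation. -/
def IsAntiDer (D : V →ₗ[ℂ] V) : Prop :=
  ∀ x y : V, D (br x y) = br x (D y) - br y (D x)

lemma e_apply (i j : Fin 4) : e i j = if j = i then 1 else 0 :=
  Pi.single_apply i 1 j

lemma linearMap_ext_e {D D' : V →ₗ[ℂ] V} : D = D' ↔ ∀ j, D (e j) = D' (e j) :=
  ⟨fun h _ => h ▸ rfl, fun h => (Pi.basisFun ℂ (Fin 4)).ext fun j => by simpa [e] using h j⟩

lemma linearMap_apply_eq_sum (D : V →ₗ[ℂ] V) (y : V) : D y = ∑ j, y j • D (e j) := by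
  simp only [← map_smul, ← map_sum]
  congr 1
  ext i
  simp [e_apply]

lemma br_e_zero_left (y : V) : br (e 0) y = y 1 • e 2 := by
  simp [br, e_apply]

lemma br_e_one_left (y : V) : br (e 1) y = (-y 1) • e 2 + y 0 • e 3 := by
  simp [br, e_apply, neg_smul]

lemma smul_e_two_add_smul_e_three_eq_zero {a b : ℂ} : a • e 2 + b • e 3 = 0 ↔ a = 0 ∧ b = 0 := by
  refine ⟨fun h => ⟨?_, ?_⟩, fun ⟨ha, hb⟩ => by simp [ha, hb]⟩
  · simpa [e_apply] using congrFun h 2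
  · simpa [e_apply] using congrFun h 3

namespace IsAntiDer

variable {D : V →ₗ[ℂ] V} (hD : IsAntiDer D)
include hD

lemma map_br_add_br (x y : V) : D (br x y + br y x) = 0 := by
  rw [map_add, hD, hD, sub_add_sub_cancel', sub_self]

lemma map_e_two : D (e 2) = 0 := by
  have h := hD.map_br_add_br (e 1) (e 1)
  simpa [br_e_one_left, e_apply, ← two_smul ℂ] using h

lemma map_e_three : D (e 3) = 0 := by
  have h := hD.map_br_add_br (e 0) (e 1)
  simpa [br_e_zero_left, br_e_one_left, e_apply, hD.map_e_two] using h

lemma apply_e_zero_zero_and_apply_e_one_one :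
    D (e 0) 0 = 0 ∧ D (e 1) 1 = -D (e 0) 1 := by
  have h : (D (e 1) 1 + D (e 0) 1) • e 2 + (-D (e 0) 0) • e 3 = 0 := by
    have h := hD (e 0) (e 1)
    rw [br_e_zero_left, br_e_zero_left, br_e_one_left, e_apply, if_pos rfl, one_smul,
      hD.map_e_two] at h
    linear_combination (norm := module) -h
  obtain ⟨h2, h3⟩ := smul_e_two_add_smul_e_three_eq_zero.mp h
  exact ⟨neg_eq_zero.mp h3, eq_neg_of_add_eq_zero_left h2⟩

end IsAntiDer

section Parametrization

variable {D : V →ₗ[ℂ] V}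

lemma IsAntiDer.exists_params (hD : IsAntiDer D) : ∃ m c u v w z : ℂ,
    D (e 0) = c • e 1 + u • e 2 + v • e 3 ∧
    D (e 1) = m • e 0 + (-c) • e 1 + w • e 2 + z • e 3 ∧
    D (e 2) = 0 ∧ D (e 3) = 0 := by
  obtain ⟨h00, h11⟩ := hD.apply_e_zero_zero_and_apply_e_one_one
  refine ⟨D (e 1) 0, D (e 0) 1, D (e 0) 2, D (e 0) 3, D (e 1) 2, D (e 1) 3, ?_, ?_,
    hD.map_e_two, hD.map_e_three⟩ <;>
  · funext i
    fin_cases i <;> simp [e_apply, h00, h11]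

lemma isAntiDer_of_params {m c u v w z : ℂ}
    (h0 : D (e 0) = c • e 1 + u • e 2 + v • e 3)
    (h1 : D (e 1) = m • e 0 + (-c) • e 1 + w • e 2 + z • e 3)
    (h2 : D (e 2) = 0) (h3 : D (e 3) = 0) : IsAntiDer D := by
  have map_br : ∀ x y, D (br x y) = 0 := fun x y => by simp [br, h2, h3]
  have apply_zero : ∀ y, D y 0 = y 1 * m := fun y => by
    simp [linearMap_apply_eq_sum D y, Fin.sum_univ_four, h0, h1, h2, h3, e_apply]
  have apply_one : ∀ y, D y 1 = (y 0 - y 1) * c := fun y => by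
    simp [linearMap_apply_eq_sum D y, Fin.sum_univ_four, h0, h1, h2, h3, e_apply]
    ring
  have br_symm : ∀ x y, br x (D y) = br y (D x) := fun x y => by
    simp only [br, apply_zero, apply_one]
    congr 2 <;> ring
  intro x y
  rw [map_br, br_symm, sub_self]

lemma isAntiDer_iff : IsAntiDer D ↔ ∃ m c u v w z : ℂ,
    D (e 0) = c • e 1 + u • e 2 + v • e 3 ∧
    D (e 1) = m • e 0 + (-c) • e 1 + w • e 2 + z • e 3 ∧
    D (e 2) = 0 ∧ D (e 3) = 0 :=
  ⟨IsAntiDer.exists_params,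
    fun ⟨_, _, _, _, _, _, h0, h1, h2, h3⟩ => isAntiDer_of_params h0 h1 h2 h3⟩

end Parametrization

def unitEnd (i j : Fin 4) : V →ₗ[ℂ] V := (LinearMap.proj j).smulRight (e i)

def antiderBasis : Fin 6 → (V →ₗ[ℂ] V) :=
  ![unitEnd 0 1, unitEnd 1 0 - unitEnd 1 1, unitEnd 2 0, unitEnd 3 0, unitEnd 2 1, unitEnd 3 1]

lemma sum_smul_antiderBasis_apply (p : Fin 6 → ℂ) :
    (∑ i, p i • antiderBasis i) (e 0) = p 1 • e 1 + p 2 • e 2 + p 3 • e 3 ∧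
    (∑ i, p i • antiderBasis i) (e 1) = p 0 • e 0 + (-p 1) • e 1 + p 4 • e 2 + p 5 • e 3 ∧
    (∑ i, p i • antiderBasis i) (e 2) = 0 ∧ (∑ i, p i • antiderBasis i) (e 3) = 0 := by
  simp [antiderBasis, unitEnd, Fin.sum_univ_six, e_apply]

lemma linearIndependent_antiderBasis : LinearIndependent ℂ antiderBasis := by
  refine Fintype.linearIndependent_iff.mpr fun p hp => ?_
  obtain ⟨h0, h1, -, -⟩ := sum_smul_antiderBasis_apply p
  rw [hp, eq_comm] at h0 h1
  intro i
  fin_cases i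
  exacts [by simpa [e_apply] using congrFun h1 0, by simpa [e_apply] using congrFun h0 1,
    by simpa [e_apply] using congrFun h0 2, by simpa [e_apply] using congrFun h0 3,
    by simpa [e_apply] using congrFun h1 2, by simpa [e_apply] using congrFun h1 3]

lemma mem_span_antiderBasis_iff {D : V →ₗ[ℂ] V} :
    D ∈ Submodule.span ℂ (Set.range antiderBasis) ↔ IsAntiDer D := by
  rw [Submodule.mem_span_range_iff_exists_fun, isAntiDer_iff]
  constructor
  · rintro ⟨p, rfl⟩
    exact ⟨p 0, p 1, p 2, p 3, p 4, p 5, sum_smul_antiderBasis_apply p⟩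
  · rintro ⟨m, c, u, v, w, z, h0, h1, h2, h3⟩
    obtain ⟨g0, g1, g2, g3⟩ := sum_smul_antiderBasis_apply ![m, c, u, v, w, z]
    refine ⟨![m, c, u, v, w, z], linearMap_ext_e.mpr fun j => ?_⟩
    fin_cases j
    exacts [g0.trans h0.symm, g1.trans h1.symm, g2.trans h2.symm, g3.trans h3.symm]

theorem antiderivations_of_L12 :
    (∃ S : Submodule ℂ (V →ₗ[ℂ] V),
      (S : Set (V →ₗ[ℂ] V)) = {D | IsAntiDer D} ∧ Module.finrank ℂ S = 6) ∧
    (∀ D : V →ₗ[ℂ] V, IsAntiDer D ↔ ∃ m c u v w z : ℂ,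
      D (e 0) = c • e 1 + u • e 2 + v • e 3 ∧
      D (e 1) = m • e 0 + (-c) • e 1 + w • e 2 + z • e 3 ∧
      D (e 2) = 0 ∧ D (e 3) = 0) := by
  refine ⟨⟨Submodule.span ℂ (Set.range antiderBasis), ?_, ?_⟩, fun _ => isAntiDer_iff⟩
  · ext D
    exact mem_span_antiderBasis_iff
  · rw [finrank_span_eq_card linearIndependent_antiderBasis, Fintype.card_fin]
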